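/- For all real y ≥ 3, the sum over natural numbers n with 1 ≤ n ≤ y of d(n)², where d(n) is the number of divisors of n, is O(y · (log y)³); more precisely there exists a constant C > 0 such that ∑_{n ≤ y} d(n)² ≤ C · y · (log y)³ for all y ≥ 3. -/

import Mathlib

/-!
Sending a pair `(a, b)` of divisors of `n` to `(gcd a b, a / gcd a b, b / gcd a b)` is injective,
and the product of that triple is `lcm a b`, which divides `n`. Hence `d(n)² ≤ d₄(n)`, the number
of triples `(x, y, z)` with `x * y * z ∣ n`. Summing over `n ≤ N` and swapping the order of
summation gives `∑_{x,y,z ≤ N} ⌊N / xyz⌋ ≤ N · H_N³`, and `H_N ≤ 1 + log N ≤ 2 log y`.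
-/

open Real Finset

theorem Finset.sum_pow_three_eq_sum_product {ι R : Type*} [CommSemiring R] (s : Finset ι)
    (f : ι → R) : (∑ x ∈ s, f x) ^ 3 = ∑ p ∈ s ×ˢ s ×ˢ s, f p.1 * f p.2.1 * f p.2.2 := by
  simp_rw [pow_three, sum_mul_sum, mul_sum, sum_product, mul_assoc]

namespace Nat

theorem Icc_filter_dvd_card_eq_div (N m : ℕ) : #{n ∈ Icc 1 N | m ∣ n} = N / m :=
  Ioc_filter_dvd_card_eq_div N m

theorem divisors_subset_Icc {n N : ℕ} (hn : n ≤ N) : n.divisors ⊆ Icc 1 N := fun _ hd =>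
  mem_Icc.mpr ⟨pos_of_mem_divisors hd, (divisor_le hd).trans hn⟩

theorem card_divisors_sq_le_card_triples {n : ℕ} {s : Finset ℕ} (hs : n.divisors ⊆ s) :
    #n.divisors ^ 2 ≤ #{p ∈ s ×ˢ s ×ˢ s | p.1 * p.2.1 * p.2.2 ∣ n} := by
  rw [sq, ← card_product]
  refine card_le_card_of_injOn
    (fun q => (gcd q.1 q.2, q.1 / gcd q.1 q.2, q.2 / gcd q.1 q.2)) ?_ ?_
  · rintro ⟨a, b⟩ hab
    simp only [coe_product, Set.mem_prod, mem_coe, mem_divisors] at hab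
    obtain ⟨⟨ha, hn⟩, hb, -⟩ := hab
    have hg_mul : gcd a b * (a / gcd a b) = a := Nat.mul_div_cancel' (gcd_dvd_left a b)
    have hlcm : gcd a b * (a / gcd a b) * (b / gcd a b) = lcm a b := by
      rw [hg_mul, ← Nat.mul_div_assoc _ (gcd_dvd_right a b)]
      rfl
    simp only [coe_filter, Set.mem_ofPred_eq, mem_product, hlcm]
    refine ⟨⟨hs ?_, hs ?_, hs ?_⟩, lcm_dvd ha hb⟩ <;> rw [mem_divisors] <;> refine ⟨?_, hn⟩
    · exact (gcd_dvd_left a b).trans ha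
    · exact (div_dvd_of_dvd (gcd_dvd_left a b)).trans ha
    · exact (div_dvd_of_dvd (gcd_dvd_right a b)).trans hb
  · rintro ⟨a, b⟩ - ⟨a', b'⟩ - h
    simp only [Prod.mk.injEq] at h ⊢
    obtain ⟨hg, ha, hb⟩ := h
    constructor
    · rw [← Nat.mul_div_cancel' (gcd_dvd_left a b), ha, hg,
        Nat.mul_div_cancel' (gcd_dvd_left a' b')]
    · rw [← Nat.mul_div_cancel' (gcd_dvd_right a b), hb, hg,
        Nat.mul_div_cancel' (gcd_dvd_right a' b')]

theorem sum_card_divisors_sq_le (N : ℕ) :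
    ∑ n ∈ Icc 1 N, (#n.divisors : ℝ) ^ 2 ≤ N * harmonic N ^ 3 := by
  set I := Icc 1 N
  calc ∑ n ∈ I, (#n.divisors : ℝ) ^ 2
      ≤ ∑ n ∈ I, (#{p ∈ I ×ˢ I ×ˢ I | p.1 * p.2.1 * p.2.2 ∣ n} : ℝ) :=
        sum_le_sum fun n hn =>
          mod_cast card_divisors_sq_le_card_triples (divisors_subset_Icc (mem_Icc.mp hn).2)
    _ = ∑ p ∈ I ×ˢ I ×ˢ I, ((N / (p.1 * p.2.1 * p.2.2) : ℕ) : ℝ) := by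
        exact_mod_cast (sum_card_bipartiteAbove_eq_sum_card_bipartiteBelow
          (r := fun n (p : ℕ × ℕ × ℕ) => p.1 * p.2.1 * p.2.2 ∣ n)).trans
          (sum_congr rfl fun p _ => Icc_filter_dvd_card_eq_div N _)
    _ ≤ ∑ p ∈ I ×ˢ I ×ˢ I, N * ((p.1 : ℝ)⁻¹ * (p.2.1 : ℝ)⁻¹ * (p.2.2 : ℝ)⁻¹) :=
        sum_le_sum fun p _ => by
          calc ((N / (p.1 * p.2.1 * p.2.2) : ℕ) : ℝ) ≤ N / (p.1 * p.2.1 * p.2.2 : ℕ) :=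
                cast_div_le
            _ = _ := by push_cast; field_simp
    _ = N * harmonic N ^ 3 := by
        rw [← mul_sum, ← sum_pow_three_eq_sum_product I fun x => (x : ℝ)⁻¹, harmonic_eq_sum_Icc]
        push_cast
        rfl

end Nat

theorem stmt0 :
    ∃ C : ℝ, 0 < C ∧ ∀ y : ℝ, 3 ≤ y →
      (∑ n ∈ Finset.Icc 1 ⌊y⌋₊, ((n.divisors.card : ℝ)) ^ 2) ≤
        C * y * (Real.log y) ^ 3 := by
  refine ⟨8, by norm_num, fun y hy => ?_⟩
  have hy0 : 0 < y := by linarith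
  have hlog : 1 ≤ log y := by
    rw [le_log_iff_exp_le hy0]
    linarith [exp_one_lt_d9]
  set N := ⌊y⌋₊
  have hNy : (N : ℝ) ≤ y := Nat.floor_le hy0.le
  have hN : 0 < N := Nat.floor_pos.mpr (by linarith)
  have hH_nonneg : (0 : ℝ) ≤ harmonic N := mod_cast (harmonic_pos hN.ne').le
  have hH : (harmonic N : ℝ) ≤ 2 * log y := by
    have := log_le_log (by exact_mod_cast hN) hNy
    linarith [harmonic_le_one_add_log N]
  calc ∑ n ∈ Icc 1 N, (n.divisors.card : ℝ) ^ 2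
      ≤ N * harmonic N ^ 3 := Nat.sum_card_divisors_sq_le N
    _ ≤ y * (2 * log y) ^ 3 := by gcongr
    _ = 8 * y * log y ^ 3 := by ring
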